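/- arXiv:hep-th/9312183 — 7 statements merged into one kernel-verified Lean document; each statement's English description precedes it below -/
import Mathlib

section
/- Let $M$ be an antisymmetric $n \times n$ matrix over a commutative ring, and define a bracket on the polynomial algebra in generators $G_1, \dots, G_n$ by $[G_a, G_b] = M_{ab} G_a G_b$ (no summation), extended to all polynomials as a biderivation. Then this bracket satisfies the Jacobi identity $[[G_a,G_b],G_c] + [[G_b,G_c],G_a] + [[G_c,G_a],G_b] = 0$ for all generators, for an arbitrary antisymmetric matrix $M$. -/
open MvPolynomial

/-- For an antisymmetric matrix `M`, any bracket on the polynomial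
algebra which is antisymmetric, a biderivation, scalar-linear, and satisfies
`[G_a, G_b] = M a b • (G_a * G_b)` on generators, satisfies the Jacobi identity
on the generators. -/
theorem selfReproducing_jacobi {R : Type*} [CommRing R] {n : ℕ}
    (M : Fin n → Fin n → R) (hM : ∀ a b, M a b = - M b a)
    (B : MvPolynomial (Fin n) R → MvPolynomial (Fin n) R → MvPolynomial (Fin n) R)
    (hanti : ∀ f g, B f g = - B g f)
    (hadd : ∀ f g h, B (f + g) h = B f h + B g h)
    (hleib : ∀ f g h, B (f * g) h = f * B g h + B f h * g)
    (hsmul : ∀ (c : R) (f g), B (c • f) g = c • B f g)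
    (hgen : ∀ a b, B (X a) (X b) = M a b • (X a * X b)) :
    ∀ a b c : Fin n,
      B (B (X a) (X b)) (X c) + B (B (X b) (X c)) (X a) + B (B (X c) (X a)) (X b) = 0 := by
  have h1 : ∀ f, B 1 f = 0 := by
    intro f
    have h := hleib 1 1 f
    rw [one_mul, one_mul, mul_one] at h
    have h2 : B 1 f + 0 = B 1 f + B 1 f := by rw [add_zero]; exact h
    exact (add_left_cancel h2).symm
  have hC : ∀ (r : R) f, B (C r) f = 0 := by
    intro r f
    have : (C r : MvPolynomial (Fin n) R) = r • 1 := by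
      rw [smul_eq_C_mul, mul_one]
    rw [this, hsmul, h1, smul_zero]
  intro a b c
  simp only [hgen, hsmul, hleib, hgen, smul_eq_C_mul]
  rw [hM b a, hM c b, hM a c]
  simp only [hC, map_neg]
  push_cast
  ring
end

section
/- Define a sequence of rationals by $\alpha_1 = -1/2$, $\alpha_2 = -1/12$, $\alpha_3 = 0$, and for $k > 3$, $\alpha_k = -\frac{1}{k+1} \sum_{l=1}^{k-3} \alpha_{l+1} \alpha_{k-l-1}$. Then $\alpha_k = 0$ for all odd $k > 1$. -/
open Finset

/-- the BRST coefficient sequence vanishes at all odd indices `k > 1`. -/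
theorem alpha_odd_vanish (α : ℕ → ℚ)
    (h1 : α 1 = -1/2) (h2 : α 2 = -1/12) (h3 : α 3 = 0)
    (hrec : ∀ k, 3 < k →
      α k = -(1 / ((k : ℚ) + 1)) * ∑ l ∈ Finset.Icc 1 (k - 3), α (l + 1) * α (k - l - 1)) :
    ∀ k, 1 < k → Odd k → α k = 0 := by
  intro k
  induction k using Nat.strong_induction_on with
  | _ k ih =>
    intro hk hodd
    rcases lt_or_ge k 4 with h4 | h4
    · interval_cases k
      · exact absurd hodd (by decide)
      · exact h3
    · rw [hrec k (by omega)]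
      have hz : ∀ l ∈ Icc 1 (k - 3), α (l + 1) * α (k - l - 1) = 0 := by
        intro l hl
        simp only [mem_Icc] at hl
        rcases Nat.even_or_odd (l + 1) with he | ho
        · have hodd2 : Odd (k - l - 1) := by
            rcases hodd with ⟨m, hm⟩; rcases he with ⟨n, hn⟩
            exact ⟨m - n, by omega⟩
          rw [ih (k - l - 1) (by omega) (by omega) hodd2, mul_zero]
        · rw [ih (l + 1) (by omega) (by omega) ho, zero_mul]
      rw [Finset.sum_congr rfl hz]
      simp
end

section
/- Define a sequence of rationals by $\alpha_1 = -1/2$, $\alpha_2 = -1/12$, $\alpha_3 = 0$, and for $k > 3$, $\alpha_k = -\frac{1}{k+1} \sum_{l=1}^{k-3} \alpha_{l+1} \alpha_{k-l-1}$. Then $\alpha_k < 0$ for all even $k \geq 2$. -/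
open Finset

/-- the BRST coefficient sequence is strictly negative at all even indices. -/
theorem alpha_even_neg (α : ℕ → ℚ)
    (h1 : α 1 = -1/2) (h2 : α 2 = -1/12) (h3 : α 3 = 0)
    (hrec : ∀ k, 3 < k →
      α k = -(1 / ((k : ℚ) + 1)) * ∑ l ∈ Finset.Icc 1 (k - 3), α (l + 1) * α (k - l - 1)) :
    ∀ k, 2 ≤ k → Even k → α k < 0 := by
  have main : ∀ k, (3 ≤ k → Odd k → α k = 0) ∧ (2 ≤ k → Even k → α k < 0) := by
    intro k
    induction k using Nat.strong_induction_on with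
    | _ k IH =>
      rcases lt_or_ge k 4 with hk4 | hk4
      · constructor
        · intro h3k hodd
          interval_cases k
          · exact h3
        · intro h2k heven
          interval_cases k
          · rw [h2]; norm_num
          · exact absurd heven (by decide)
      · have hk3 : 3 < k := by omega
        have hrk := hrec k hk3
        constructor
        · intro _ hodd
          have hsum : ∑ l ∈ Finset.Icc 1 (k - 3), α (l + 1) * α (k - l - 1) = 0 := by
            apply Finset.sum_eq_zero
            intro l hl
            rw [Finset.mem_Icc] at hl
            rcases Nat.even_or_odd (l + 1) with he | ho
            · have hodd' : Odd (k - l - 1) := by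
                rcases hodd with ⟨m, hm⟩; rcases he with ⟨n, hn⟩
                exact ⟨m - n, by omega⟩
              have := (IH (k - l - 1) (by omega)).1 (by
                obtain ⟨n, hn⟩ := hodd'; omega) hodd'
              rw [this, mul_zero]
            · have := (IH (l + 1) (by omega)).1 (by
                obtain ⟨n, hn⟩ := ho; omega) ho
              rw [this, zero_mul]
          rw [hrk, hsum, mul_zero]
        · intro _ heven
          have hsum : 0 < ∑ l ∈ Finset.Icc 1 (k - 3), α (l + 1) * α (k - l - 1) := by
            apply Finset.sum_pos'
            · intro l hl
              rw [Finset.mem_Icc] at hl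
              rcases Nat.even_or_odd (l + 1) with he | ho
              · have he2 : Even (k - l - 1) := by
                  rcases heven with ⟨m, hm⟩; rcases he with ⟨n, hn⟩
                  exact ⟨m - n, by omega⟩
                have hn1 := (IH (l + 1) (by omega)).2 (by omega) he
                have hn2 := (IH (k - l - 1) (by omega)).2 (by
                  rcases he2 with ⟨n, hn⟩; omega) he2
                exact le_of_lt (mul_pos_of_neg_of_neg hn1 hn2)
              · have := (IH (l + 1) (by omega)).1 (by
                  rcases ho with ⟨n, hn⟩; omega) ho
                rw [this, zero_mul]
            · refine ⟨1, Finset.mem_Icc.mpr ⟨le_refl 1, by omega⟩, ?_⟩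
              have he2 : Even (k - 1 - 1) := by
                rcases heven with ⟨m, hm⟩; exact ⟨m - 1, by omega⟩
              have hn1 : α (1 + 1) < 0 := by rw [h2]; norm_num
              have hn2 := (IH (k - 1 - 1) (by omega)).2 (by omega) he2
              exact mul_pos_of_neg_of_neg hn1 hn2
          rw [hrk]
          have hpos : 0 < 1 / ((k : ℚ) + 1) := by positivity
          nlinarith
  intro k h2k heven
  exact (main k).2 h2k heven
end

section
/- Define a sequence of rationals by $\alpha_1 = -1/2$, $\alpha_2 = -1/12$, $\alpha_3 = 0$, and for $k > 3$, $\alpha_k = -\frac{1}{k+1} \sum_{l=1}^{k-3} \alpha_{l+1} \alpha_{k-l-1}$. Then for every $n$ there exists $k \geq n$ with $\alpha_k \neq 0$. -/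
open Finset

lemma alpha_key (α : ℕ → ℚ)
    (h1 : α 1 = -1/2) (h2 : α 2 = -1/12) (h3 : α 3 = 0)
    (hrec : ∀ k, 3 < k →
      α k = -(1 / ((k : ℚ) + 1)) * ∑ l ∈ Finset.Icc 1 (k - 3), α (l + 1) * α (k - l - 1)) :
    ∀ k, (k % 2 = 0 ∧ 2 ≤ k → α k < 0) ∧ (k % 2 = 1 ∧ 3 ≤ k → α k = 0) := by
  intro k
  induction k using Nat.strong_induction_on with
  | _ k ih =>
    constructor
    · rintro ⟨hpar, hk2⟩
      rcases eq_or_lt_of_le hk2 with h | h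
      · rw [← h, h2]; norm_num
      · have hk4 : 4 ≤ k := by omega
        rw [hrec k (by omega)]
        have hS : 0 < ∑ l ∈ Finset.Icc 1 (k - 3), α (l + 1) * α (k - l - 1) := by
          apply Finset.sum_pos'
          · intro l hl
            simp only [Finset.mem_Icc] at hl
            rcases Nat.even_or_odd l with he | ho
            · -- l even, so l ≥ 2, l+1 odd ≥ 3, α (l+1) = 0
              have hl2 : l % 2 = 0 := Nat.even_iff.mp he
              have : α (l + 1) = 0 := (ih (l + 1) (by omega)).2 ⟨by omega, by omega⟩
              rw [this, zero_mul]
            · have hl2 : l % 2 = 1 := Nat.odd_iff.mp ho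
              have h1' : α (l + 1) < 0 := (ih (l + 1) (by omega)).1 ⟨by omega, by omega⟩
              have h2' : α (k - l - 1) < 0 := (ih (k - l - 1) (by omega)).1 ⟨by omega, by omega⟩
              exact le_of_lt (mul_pos_of_neg_of_neg h1' h2')
          · refine ⟨1, Finset.mem_Icc.mpr ⟨le_rfl, by omega⟩, ?_⟩
            have h2' : α (k - 1 - 1) < 0 := (ih (k - 1 - 1) (by omega)).1 ⟨by omega, by omega⟩
            have h2'' : α 2 < 0 := by rw [h2]; norm_num
            exact mul_pos_of_neg_of_neg h2'' h2'
        have hk0 : (0:ℚ) < (k:ℚ) + 1 := by positivity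
        have : 0 < 1 / ((k:ℚ) + 1) := by positivity
        nlinarith
    · rintro ⟨hpar, hk3⟩
      rcases eq_or_lt_of_le hk3 with h | h
      · rw [← h, h3]
      · rw [hrec k h]
        have hS : ∑ l ∈ Finset.Icc 1 (k - 3), α (l + 1) * α (k - l - 1) = 0 := by
          apply Finset.sum_eq_zero
          intro l hl
          simp only [Finset.mem_Icc] at hl
          rcases Nat.even_or_odd l with he | ho
          · have hl2 : l % 2 = 0 := Nat.even_iff.mp he
            have : α (l + 1) = 0 := (ih (l + 1) (by omega)).2 ⟨by omega, by omega⟩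
            rw [this, zero_mul]
          · have hl2 : l % 2 = 1 := Nat.odd_iff.mp ho
            have : α (k - l - 1) = 0 := (ih (k - l - 1) (by omega)).2 ⟨by omega, by omega⟩
            rw [this, mul_zero]
        rw [hS, mul_zero]

/-- the BRST coefficient sequence has nonzero terms of arbitrarily high index. -/
theorem alpha_infinitely_nonzero (α : ℕ → ℚ)
    (h1 : α 1 = -1/2) (h2 : α 2 = -1/12) (h3 : α 3 = 0)
    (hrec : ∀ k, 3 < k →
      α k = -(1 / ((k : ℚ) + 1)) * ∑ l ∈ Finset.Icc 1 (k - 3), α (l + 1) * α (k - l - 1)) :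
    ∀ n : ℕ, ∃ k, n ≤ k ∧ α k ≠ 0 := by
  intro n
  refine ⟨2 * n + 2, by omega, ?_⟩
  have := (alpha_key α h1 h2 h3 hrec (2 * n + 2)).1 ⟨by omega, by omega⟩
  exact ne_of_lt this
end

section
/- Let $\mathfrak{g}$ be a finite-dimensional Lie algebra with structure constants $C^a{}_{bc}$ satisfying antisymmetry and the Jacobi identity. In the graded algebra generated by commuting $G_a$, anticommuting $\eta^a$, and anticommuting $\mathcal{P}_a$ with graded Poisson bracket determined by $[G_a, G_b] = C^c{}_{ab} G_c$, $[\mathcal{P}_a, \eta^b] = -\delta_a{}^b$, and all other basic brackets zero, the element $\Omega = G_a \eta^a - \tfrac{1}{2} \mathcal{P}_a C^a{}_{bc} \eta^c \eta^b$ satisfies $[\Omega, \Omega] = 0$. -/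
/-
Ω is odd, so its right and left ghost derivatives agree, and the graded Leibniz rule gives
∂Ω/∂G_a = η^a, ∂Ω/∂𝒫_e = -½ C^e_{bc} η^c η^b and ∂Ω/∂η^e = G_e - C^a_{em} 𝒫_a η^m.
Substituted into the bracket, the terms linear in G cancel by the antisymmetry of C. What is
left is C^e_{bc} C^a_{em} η^c η^b 𝒫_a η^m; the ghost monomial is invariant under cyclic
permutations of (c, b, m), and the cyclic sum of the coefficients is the Jacobi identity.
-/

open MvPolynomial Finset

/-- The extended algebra `ℚ[G₁,…,Gₙ] ⊗ Λ(η¹,…,ηⁿ,𝒫₁,…,𝒫ₙ)`: an element is given by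
its polynomial coefficient on each monomial in the anticommuting ghosts `η^a`
(index `Sum.inl a`) and ghost momenta `𝒫_a` (index `Sum.inr a`), the Grassmann
monomial attached to a subset `S` being the product of its generators in
increasing order of `idx`. -/
abbrev SA (n : ℕ) := Finset (Fin n ⊕ Fin n) → MvPolynomial (Fin n) ℚ

/-- Position of a Grassmann generator in the chosen ordering: ghosts first. -/
def idx {n : ℕ} : Fin n ⊕ Fin n → ℕ
  | Sum.inl a => (a : ℕ)
  | Sum.inr a => n + (a : ℕ)

/-- The Koszul sign produced when merging two ordered Grassmann monomials. -/
def sgn {n : ℕ} (T U : Finset (Fin n ⊕ Fin n)) : ℚ :=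
  (-1 : ℚ) ^ ((T ×ˢ U).filter (fun p => idx p.2 < idx p.1)).card

/-- The (super-commutative) product of the extended algebra. -/
noncomputable def amul {n : ℕ} (x y : SA n) : SA n :=
  fun S => ∑ T ∈ S.powerset, sgn T (S \ T) • (x T * y (S \ T))

/-- The unit of the extended algebra. -/
noncomputable def aone {n : ℕ} : SA n := fun S => if S = ∅ then 1 else 0

/-- The generator `G_a`. -/
noncomputable def Gg {n : ℕ} (a : Fin n) : SA n := fun S => if S = ∅ then X a else 0

/-- The ghost `η^a`. -/
noncomputable def ηg {n : ℕ} (a : Fin n) : SA n := fun S => if S = {Sum.inl a} then 1 else 0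

/-- The ghost momentum `𝒫_a`. -/
noncomputable def Pg {n : ℕ} (a : Fin n) : SA n := fun S => if S = {Sum.inr a} then 1 else 0

/-- The (even) derivative `∂/∂G_a`. -/
noncomputable def dG {n : ℕ} (a : Fin n) (x : SA n) : SA n := fun S => (pderiv a) (x S)

/-- Left derivative with respect to the Grassmann generator `i`. -/
noncomputable def dL {n : ℕ} (i : Fin n ⊕ Fin n) (x : SA n) : SA n := fun S =>
  if i ∈ S then 0
  else ((-1 : ℚ) ^ (S.filter (fun j => idx j < idx i)).card) • x (insert i S)

/-- Right derivative with respect to the Grassmann generator `i`. -/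
noncomputable def dR {n : ℕ} (i : Fin n ⊕ Fin n) (x : SA n) : SA n := fun S =>
  if i ∈ S then 0
  else ((-1 : ℚ) ^ (S.filter (fun j => idx i < idx j)).card) • x (insert i S)

/-- The graded Poisson bracket of the extended algebra, determined by
`[G_a, G_b] = C a b` (a polynomial in the `G`'s), `[𝒫_a, η^b] = -δ_a^b`, all other
basic brackets zero, extended by the graded Leibniz rule:
original (`G`) part plus ghost part. -/
noncomputable def bra {n : ℕ} (C : Fin n → Fin n → MvPolynomial (Fin n) ℚ)
    (x y : SA n) : SA n :=
  (∑ a, ∑ b, C a b • amul (dG a x) (dG b y))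
  - ∑ a, (amul (dR (Sum.inr a) x) (dL (Sum.inl a) y)
          + amul (dR (Sum.inl a) x) (dL (Sum.inr a) y))

lemma neg_one_pow_mul_self {R : Type*} [Monoid R] [HasDistribNeg R] (k : ℕ) :
    (-1 : R) ^ k * (-1) ^ k = 1 := by
  rw [← pow_add, ← two_mul, pow_mul, neg_one_sq, one_pow]

lemma Finset.sum_smul_eq_zero_of_cyclic {ι M : Type*} [Fintype ι] [AddCommGroup M]
    [Module ℚ M] (coef : ι → ι → ι → ℚ) (v : ι → ι → ι → M)
    (hv : ∀ x y z, v x y z = v y z x)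
    (hcoef : ∀ x y z, coef x y z + coef y z x + coef z x y = 0) :
    ∑ x, ∑ y, ∑ z, coef x y z • v x y z = 0 := by
  have hrot (g : ι → ι → ι → M) :
      ∑ x, ∑ y, ∑ z, g y z x = ∑ x, ∑ y, ∑ z, g x y z := by
    rw [sum_comm]; exact sum_congr rfl fun _ _ => sum_comm
  have h3 : (3 : ℚ) • ∑ x, ∑ y, ∑ z, coef x y z • v x y z = 0 := by
    calc (3 : ℚ) • ∑ x, ∑ y, ∑ z, coef x y z • v x y z
        = ∑ x, ∑ y, ∑ z, coef x y z • v x y z + ∑ x, ∑ y, ∑ z, coef y z x • v y z x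
          + ∑ x, ∑ y, ∑ z, coef z x y • v z x y := by
          rw [hrot (fun x y z => coef z x y • v z x y), hrot, hrot]; module
      _ = ∑ x, ∑ y, ∑ z, (coef x y z + coef y z x + coef z x y) • v x y z := by
          simp only [← sum_add_distrib, add_smul, ← hv]
      _ = 0 := by simp [hcoef]
  simpa using h3

namespace SA

variable {n : ℕ}

lemma idx_injective : Function.Injective (idx (n := n)) := by
  rintro (a | a) (b | b) h <;> simp only [idx, Sum.inl.injEq, Sum.inr.injEq] at h ⊢ <;> omega

lemma sgn_union_left {T U : Finset (Fin n ⊕ Fin n)} (V : Finset (Fin n ⊕ Fin n))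
    (h : Disjoint T U) : sgn (T ∪ U) V = sgn T V * sgn U V := by
  rw [sgn, union_product, filter_union, card_union_of_disjoint, pow_add, sgn, sgn]
  exact disjoint_filter_filter (disjoint_product.2 (Or.inl h))

lemma sgn_union_right (T : Finset (Fin n ⊕ Fin n)) {U V : Finset (Fin n ⊕ Fin n)}
    (h : Disjoint U V) : sgn T (U ∪ V) = sgn T U * sgn T V := by
  rw [sgn, product_union, filter_union, card_union_of_disjoint, pow_add, sgn, sgn]
  exact disjoint_filter_filter (disjoint_product.2 (Or.inr h))

lemma sgn_singleton_left (i : Fin n ⊕ Fin n) (U : Finset (Fin n ⊕ Fin n)) :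
    sgn {i} U = (-1) ^ #(U.filter fun j => idx j < idx i) := by
  simp [sgn, filter_map]

lemma sgn_singleton_right (T : Finset (Fin n ⊕ Fin n)) (i : Fin n ⊕ Fin n) :
    sgn T {i} = (-1) ^ #(T.filter fun j => idx i < idx j) := by
  simp [sgn, filter_map]

lemma card_filter_lt_add_card_filter_gt {i : Fin n ⊕ Fin n} {T : Finset (Fin n ⊕ Fin n)}
    (hi : i ∉ T) :
    #(T.filter fun j => idx j < idx i) + #(T.filter fun j => idx i < idx j) = #T := by
  rw [← card_filter_add_card_filter_not (s := T) (fun j => idx j < idx i)]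
  congr 2
  refine filter_congr fun j hj => ?_
  have : idx j ≠ idx i := idx_injective.ne (ne_of_mem_of_not_mem hj hi)
  omega

lemma sgn_swap {T U : Finset (Fin n ⊕ Fin n)} (h : Disjoint T U) :
    sgn U T = (-1) ^ (#T * #U) * sgn T U := by
  have hsplit : #((U ×ˢ T).filter fun p => idx p.2 < idx p.1)
      + #((T ×ˢ U).filter fun p => idx p.2 < idx p.1) = #T * #U := by
    rw [← card_product, ← card_filter_add_card_filter_not (s := T ×ˢ U)
      (fun p : (Fin n ⊕ Fin n) × (Fin n ⊕ Fin n) => idx p.1 < idx p.2)]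
    congr 1
    · refine card_nbij' Prod.swap Prod.swap ?_ ?_ ?_ ?_ <;> intro p <;> simp +contextual
    · refine congrArg card (filter_congr fun p hp => ?_)
      obtain ⟨h1, h2⟩ := mem_product.1 hp
      have : idx p.1 ≠ idx p.2 := idx_injective.ne fun he => disjoint_left.1 h h1 (he ▸ h2)
      omega
  rw [sgn, sgn, ← hsplit, pow_add, mul_assoc, ← pow_add, ← two_mul, pow_mul]
  simp

lemma sgn_singleton_swap {p q : Fin n ⊕ Fin n} (h : p ≠ q) : sgn {q} {p} = -sgn {p} {q} := by
  rw [sgn_swap (disjoint_singleton.2 h)]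
  simp

lemma sgn_insert_left {i : Fin n ⊕ Fin n} {T : Finset (Fin n ⊕ Fin n)} (hi : i ∉ T)
    (U : Finset (Fin n ⊕ Fin n)) :
    sgn (insert i T) U = (-1) ^ #(U.filter fun j => idx j < idx i) * sgn T U := by
  rw [insert_eq, sgn_union_left _ (disjoint_singleton_left.2 hi), sgn_singleton_left]

lemma sgn_insert_right (T : Finset (Fin n ⊕ Fin n)) {i : Fin n ⊕ Fin n}
    {U : Finset (Fin n ⊕ Fin n)} (hi : i ∉ U) :
    sgn T (insert i U) = (-1) ^ #(T.filter fun j => idx i < idx j) * sgn T U := by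
  rw [insert_eq, sgn_union_right _ (disjoint_singleton_left.2 hi), sgn_singleton_right]

section Bilinear

variable (x x' y y' : SA n)

lemma amul_zero_left : amul 0 y = 0 := by
  funext S; simp [amul]

lemma amul_zero_right : amul x 0 = 0 := by
  funext S; simp [amul]

lemma amul_add_right : amul x (y + y') = amul x y + amul x y' := by
  funext S; simp [amul, mul_add, sum_add_distrib]

lemma amul_sub_left : amul (x - x') y = amul x y - amul x' y := by
  funext S; simp [amul, sub_mul, smul_sub, sum_sub_distrib]

lemma amul_sub_right : amul x (y - y') = amul x y - amul x y' := by
  funext S; simp [amul, mul_sub, smul_sub, sum_sub_distrib]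

lemma amul_neg_left : amul (-x) y = -amul x y := by
  funext S; simp [amul]

lemma amul_neg_right : amul x (-y) = -amul x y := by
  funext S; simp [amul]

lemma amul_smul_left (q : ℚ) : amul (q • x) y = q • amul x y := by
  funext S; simp [amul, smul_sum, smul_comm q]

lemma amul_smul_right (q : ℚ) : amul x (q • y) = q • amul x y := by
  funext S; simp [amul, smul_sum, smul_comm q]

lemma amul_sum_left {ι : Type*} (s : Finset ι) (f : ι → SA n) :
    amul (∑ i ∈ s, f i) y = ∑ i ∈ s, amul (f i) y := by
  funext S; simp only [amul, Finset.sum_apply, sum_mul, smul_sum]; exact sum_comm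

lemma amul_sum_right {ι : Type*} (s : Finset ι) (f : ι → SA n) :
    amul x (∑ i ∈ s, f i) = ∑ i ∈ s, amul x (f i) := by
  funext S; simp only [amul, Finset.sum_apply, mul_sum, smul_sum]; exact sum_comm

lemma amul_ite_zero_left (p : Prop) [Decidable p] :
    amul (if p then x else 0) y = if p then amul x y else 0 := by
  split_ifs <;> simp [amul_zero_left]

lemma amul_ite_zero_right (p : Prop) [Decidable p] :
    amul x (if p then y else 0) = if p then amul x y else 0 := by
  split_ifs <;> simp [amul_zero_right]

end Bilinear

lemma amul_single_single (T U : Finset (Fin n ⊕ Fin n)) (v w : MvPolynomial (Fin n) ℚ) :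
    amul (Pi.single T v) (Pi.single U w) =
      if Disjoint T U then Pi.single (T ∪ U) (sgn T U • (v * w)) else 0 := by
  funext S
  by_cases hT : T ⊆ S
  · rw [amul, sum_eq_single T (fun T' _ h => by simp [h])
      (fun h => absurd (mem_powerset.2 hT) h)]
    by_cases hU : S \ T = U
    · subst hU
      simp [disjoint_sdiff, union_sdiff_of_subset hT]
    · have : ¬ (Disjoint T U ∧ S = T ∪ U) := by
        rintro ⟨hd, rfl⟩; exact hU (union_sdiff_cancel_left hd)
      split_ifs <;> simp_all
  · rw [amul, sum_eq_zero fun T' hT' => by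
      simp [Pi.single_apply, show T' ≠ T by rintro rfl; exact hT (mem_powerset.1 hT')]]
    have : S ≠ T ∪ U := by rintro rfl; exact hT subset_union_left
    split_ifs <;> simp [this]

lemma amul_single_empty_left (p : MvPolynomial (Fin n) ℚ) (y : SA n) :
    amul (Pi.single ∅ p) y = p • y := by
  funext S
  rw [amul, sum_eq_single ∅ (fun T _ h => by simp [h]) (by simp)]
  simp [sgn]

lemma amul_single_empty_right (x : SA n) (p : MvPolynomial (Fin n) ℚ) :
    amul x (Pi.single ∅ p) = p • x := by
  funext S
  rw [amul, sum_eq_single S (fun T hT h => ?_) (by simp)]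
  · simp [sgn, mul_comm]
  · have : S \ T ≠ ∅ := by
      rw [Ne, sdiff_eq_empty_iff_subset]
      exact fun h' => h (subset_antisymm (mem_powerset.1 hT) h')
    simp [this]

lemma aone_eq_single : (aone : SA n) = Pi.single ∅ 1 := by
  funext S; simp [aone, Pi.single_apply]

lemma Gg_eq_single (a : Fin n) : Gg a = Pi.single ∅ (X a : MvPolynomial (Fin n) ℚ) := by
  funext S; simp [Gg, Pi.single_apply]

lemma ηg_eq_single (a : Fin n) : ηg a = Pi.single {Sum.inl a} 1 := by
  funext S; simp [ηg, Pi.single_apply]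

lemma Pg_eq_single (a : Fin n) : Pg a = Pi.single {Sum.inr a} 1 := by
  funext S; simp [Pg, Pi.single_apply]

lemma amul_aone_left (y : SA n) : amul aone y = y := by
  rw [aone_eq_single, amul_single_empty_left, one_smul]

lemma amul_aone_right (x : SA n) : amul x aone = x := by
  rw [aone_eq_single, amul_single_empty_right, one_smul]

lemma Gg_amul (a : Fin n) (y : SA n) : amul (Gg a) y = (X a : MvPolynomial (Fin n) ℚ) • y := by
  rw [Gg_eq_single, amul_single_empty_left]

lemma amul_Gg (x : SA n) (a : Fin n) : amul x (Gg a) = (X a : MvPolynomial (Fin n) ℚ) • x := by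
  rw [Gg_eq_single, amul_single_empty_right]

variable (n) in
def homogeneous (k : ZMod 2) : Submodule ℚ (SA n) where
  carrier := {x | ∀ S, (#S : ZMod 2) ≠ k → x S = 0}
  add_mem' hx hy S hS := by simp [hx S hS, hy S hS]
  zero_mem' _ _ := rfl
  smul_mem' q x hx S hS := by simp [hx S hS]

lemma single_mem_homogeneous (T : Finset (Fin n ⊕ Fin n)) (v : MvPolynomial (Fin n) ℚ) :
    Pi.single T v ∈ homogeneous n #T := by
  intro S hS
  rw [Pi.single_apply, if_neg (by rintro rfl; exact hS rfl)]

lemma amul_mem_homogeneous {x y : SA n} {k l : ZMod 2} (hx : x ∈ homogeneous n k)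
    (hy : y ∈ homogeneous n l) : amul x y ∈ homogeneous n (k + l) := by
  intro S hS
  refine sum_eq_zero fun T hT => ?_
  by_cases hk : (#T : ZMod 2) = k
  · have hl : (#(S \ T) : ZMod 2) ≠ l := by
      rintro hl
      rw [← card_sdiff_add_card_eq_card (mem_powerset.1 hT), Nat.cast_add, hl, hk,
        add_comm] at hS
      exact hS rfl
    rw [hy _ hl, mul_zero, smul_zero]
  · rw [hx _ hk, zero_mul, smul_zero]

lemma Gg_mem_homogeneous (a : Fin n) : Gg a ∈ homogeneous n 0 := by
  simpa [Gg_eq_single] using single_mem_homogeneous (∅ : Finset (Fin n ⊕ Fin n)) (X a)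

lemma ηg_mem_homogeneous (a : Fin n) : ηg a ∈ homogeneous n 1 := by
  simpa [ηg_eq_single] using single_mem_homogeneous {Sum.inl a} (1 : MvPolynomial (Fin n) ℚ)

lemma Pg_mem_homogeneous (a : Fin n) : Pg a ∈ homogeneous n 1 := by
  simpa [Pg_eq_single] using single_mem_homogeneous {Sum.inr a} (1 : MvPolynomial (Fin n) ℚ)

lemma amul_comm_of_mem_even {x : SA n} (hx : x ∈ homogeneous n 0) (y : SA n) :
    amul x y = amul y x := by
  funext S
  have hinv : ∀ T ∈ S.powerset, S \ (S \ T) = T := fun T hT =>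
    Finset.sdiff_sdiff_eq_self (mem_powerset.1 hT)
  refine sum_nbij' (S \ ·) (S \ ·) (by simp) (by simp) hinv hinv fun T hT => ?_
  rw [hinv T hT, sgn_swap disjoint_sdiff, mul_comm (x T)]
  by_cases hT : (#T : ZMod 2) = 0
  · rw [((ZMod.natCast_eq_zero_iff_even.1 hT).mul_right _).neg_one_pow, one_mul]
  · simp [hx T hT]

lemma dR_eq_dL_of_mem_odd {x : SA n} (hx : x ∈ homogeneous n 1) (i : Fin n ⊕ Fin n) :
    dR i x = dL i x := by
  funext S
  unfold dR dL
  split_ifs with hi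
  · rfl
  by_cases hxS : x (insert i S) = 0
  · simp [hxS]
  have hcard : (#(insert i S) : ZMod 2) = 1 := by_contra fun h => hxS (hx _ h)
  rw [card_insert_of_notMem hi, Nat.cast_succ, add_eq_right,
    ZMod.natCast_eq_zero_iff_even, Nat.even_iff] at hcard
  -- the two sign exponents add up to `#S`, which is even
  have h := card_filter_lt_add_card_filter_gt hi
  congr 1
  refine neg_one_pow_congr ?_
  simp only [Nat.even_iff]
  omega

noncomputable def involute (x : SA n) : SA n := fun T => (-1 : ℚ) ^ #T • x T

lemma dL_amul_apply_of_notMem (i : Fin n ⊕ Fin n) (x y : SA n) {S : Finset (Fin n ⊕ Fin n)}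
    (hi : i ∉ S) :
    dL i (amul x y) S = amul (dL i x) y S + amul (involute x) (dL i y) S := by
  simp only [dL, amul, if_neg hi, sum_powerset_insert hi, smul_add, smul_sum]
  rw [add_comm]
  congr 1 <;> refine sum_congr rfl fun T hT => ?_
  all_goals
    have hTS := mem_powerset.1 hT
    have hiT : i ∉ T := fun h => hi (hTS h)
    have hiU : i ∉ S \ T := fun h => hi (mem_sdiff.1 h).1
    have hlt : #(S.filter fun j => idx j < idx i)
        = #(T.filter fun j => idx j < idx i) + #((S \ T).filter fun j => idx j < idx i) := by
      rw [← card_union_of_disjoint (disjoint_filter_filter disjoint_sdiff), ← filter_union,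
        union_sdiff_of_subset hTS]
  · rw [insert_sdiff_insert, sdiff_insert_of_notMem hi, if_neg hiT, sgn_insert_left hiT, hlt]
    simp only [smul_smul, smul_mul_assoc, pow_add]
    congr 1
    linear_combination (-1 : ℚ) ^ #(T.filter fun j => idx j < idx i) * sgn T (S \ T) *
      neg_one_pow_mul_self (R := ℚ) (#((S \ T).filter fun j => idx j < idx i))
  · rw [insert_sdiff_of_notMem _ hiT, if_neg hiU, sgn_insert_right _ hiU, involute,
      ← card_filter_lt_add_card_filter_gt hiT, hlt]
    simp only [smul_smul, smul_mul_assoc, mul_smul_comm, pow_add]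
    congr 1
    ring

lemma dL_amul_apply_of_mem (i : Fin n ⊕ Fin n) (x y : SA n)
    {S : Finset (Fin n ⊕ Fin n)} (hi : i ∈ S) :
    amul (dL i x) y S + amul (involute x) (dL i y) S = 0 := by
  obtain ⟨S, hiS, rfl⟩ : ∃ S', i ∉ S' ∧ insert i S' = S :=
    ⟨S.erase i, notMem_erase i S, insert_erase hi⟩
  have hdx : ∀ T, dL i x (insert i T) = 0 := fun T => if_pos (mem_insert_self i T)
  have hdy : ∀ T, i ∉ T → dL i y (insert i S \ T) = 0 := fun T hiT =>
    if_pos (mem_sdiff.2 ⟨mem_insert_self i S, hiT⟩)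
  simp only [amul, sum_powerset_insert hiS, hdx, zero_mul, smul_zero, sum_const_zero, add_zero]
  have hB : ∑ T ∈ S.powerset,
      sgn T (insert i S \ T) • (involute x T * dL i y (insert i S \ T)) = 0 :=
    sum_eq_zero fun T hT => by rw [hdy T fun h => hiS (mem_powerset.1 hT h), mul_zero, smul_zero]
  -- what is left pairs the summand of `amul (dL i x) y` at `T` with that of
  -- `amul (involute x) (dL i y)` at `insert i T`, and each pair cancels
  rw [hB, zero_add, ← sum_add_distrib]
  refine sum_eq_zero fun T hT => ?_
  have hiT : i ∉ T := fun h => hiS (mem_powerset.1 hT h)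
  have hiU : i ∉ S \ T := fun h => hiS (mem_sdiff.1 h).1
  rw [insert_sdiff_of_notMem _ hiT, insert_sdiff_insert, sdiff_insert_of_notMem hiS, dL, dL,
    if_neg hiT, if_neg hiU, involute, card_insert_of_notMem hiT, sgn_insert_left hiT,
    sgn_insert_right _ hiU, ← card_filter_lt_add_card_filter_gt hiT]
  simp only [smul_smul, smul_mul_assoc, mul_smul_comm, ← add_smul]
  convert zero_smul ℚ (x (insert i T) * y (insert i (S \ T)))
  linear_combination -(-1 : ℚ) ^ #(T.filter fun j => idx i < idx j) * sgn T (S \ T) *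
    (-1) ^ #(T.filter fun j => idx j < idx i) *
    neg_one_pow_mul_self (R := ℚ) (#((S \ T).filter fun j => idx j < idx i))

lemma dL_amul (i : Fin n ⊕ Fin n) (x y : SA n) :
    dL i (amul x y) = amul (dL i x) y + amul (involute x) (dL i y) := by
  funext S
  by_cases hi : i ∈ S
  · rw [Pi.add_apply, dL_amul_apply_of_mem i x y hi, dL, if_pos hi]
  · exact dL_amul_apply_of_notMem i x y hi

lemma dG_amul (a : Fin n) (x y : SA n) :
    dG a (amul x y) = amul (dG a x) y + amul x (dG a y) := by
  funext S
  simp only [dG, amul, Pi.add_apply, map_sum, ← sum_add_distrib]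
  refine sum_congr rfl fun T _ => ?_
  rw [Derivation.map_smul, Derivation.leibniz, smul_eq_mul, smul_eq_mul, ← smul_add, add_comm,
    mul_comm]

section Linear

variable (i : Fin n ⊕ Fin n) (a : Fin n) (x y : SA n)

lemma dL_sub : dL i (x - y) = dL i x - dL i y := by
  funext S; simp only [dL, Pi.sub_apply]; split_ifs <;> simp [smul_sub]

lemma dL_smul (q : ℚ) : dL i (q • x) = q • dL i x := by
  funext S; simp only [dL, Pi.smul_apply]; split_ifs <;> simp [smul_comm _ q]

lemma dL_sum {ι : Type*} (s : Finset ι) (f : ι → SA n) :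
    dL i (∑ j ∈ s, f j) = ∑ j ∈ s, dL i (f j) := by
  funext S; simp only [dL, Finset.sum_apply]; split_ifs <;> simp [smul_sum]

lemma dG_sub : dG a (x - y) = dG a x - dG a y := by
  funext S; simp [dG]

lemma dG_smul (q : ℚ) : dG a (q • x) = q • dG a x := by
  funext S; simp [dG]

lemma dG_sum {ι : Type*} (s : Finset ι) (f : ι → SA n) :
    dG a (∑ j ∈ s, f j) = ∑ j ∈ s, dG a (f j) := by
  funext S; simp [dG]

end Linear

lemma dL_single_empty (i : Fin n ⊕ Fin n) (v : MvPolynomial (Fin n) ℚ) :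
    dL i (Pi.single ∅ v) = 0 := by
  funext S; simp [dL]

lemma dL_single_singleton (i j : Fin n ⊕ Fin n) (v : MvPolynomial (Fin n) ℚ) :
    dL i (Pi.single {j} v) = if i = j then Pi.single ∅ v else 0 := by
  funext S
  have key : i ∉ S → (insert i S = {j} ↔ i = j ∧ S = ∅) := by
    intro hi
    constructor
    · intro h
      have hij : i = j := mem_singleton.1 (h ▸ mem_insert_self i S)
      refine ⟨hij, eq_empty_of_forall_notMem fun k hk => hi ?_⟩
      have hk' : k ∈ ({j} : Finset _) := h ▸ mem_insert_of_mem hk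
      rwa [hij, ← mem_singleton.1 hk']
    · rintro ⟨rfl, rfl⟩; rfl
  unfold dL
  split_ifs with hi hij hij
  · simp [ne_empty_of_mem hi]
  · rfl
  · simp_all [Pi.single_apply]
  · simp_all

lemma dL_Gg (i : Fin n ⊕ Fin n) (a : Fin n) : dL i (Gg a) = 0 := by
  rw [Gg_eq_single, dL_single_empty]

lemma dL_ηg (i : Fin n ⊕ Fin n) (a : Fin n) :
    dL i (ηg a) = if i = Sum.inl a then aone else 0 := by
  rw [ηg_eq_single, dL_single_singleton, aone_eq_single]

lemma dL_Pg (i : Fin n ⊕ Fin n) (a : Fin n) :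
    dL i (Pg a) = if i = Sum.inr a then aone else 0 := by
  rw [Pg_eq_single, dL_single_singleton, aone_eq_single]

lemma dG_Gg (a b : Fin n) : dG a (Gg b) = if a = b then aone else 0 := by
  funext S
  by_cases h : a = b <;> by_cases hS : S = ∅ <;> simp [dG, Gg, aone, h, hS]

lemma dG_ηg (a b : Fin n) : dG a (ηg b) = 0 := by
  funext S; simp [dG, ηg, apply_ite]

lemma dG_Pg (a b : Fin n) : dG a (Pg b) = 0 := by
  funext S; simp [dG, Pg, apply_ite]

lemma involute_single (T : Finset (Fin n ⊕ Fin n)) (v : MvPolynomial (Fin n) ℚ) :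
    involute (Pi.single T v) = (-1 : ℚ) ^ #T • Pi.single T v := by
  funext S; by_cases h : S = T <;> simp [involute, h]

lemma involute_Gg (a : Fin n) : involute (Gg a) = Gg a := by
  simp [Gg_eq_single, involute_single]

lemma involute_ηg (a : Fin n) : involute (ηg a) = -ηg a := by
  simp [ηg_eq_single, involute_single]

lemma involute_Pg (a : Fin n) : involute (Pg a) = -Pg a := by
  simp [Pg_eq_single, involute_single]

section Charge

variable (C : Fin n → Fin n → Fin n → ℚ)

noncomputable def brstCharge : SA n :=
  (∑ a, amul (Gg a) (ηg a))
    - (1/2 : ℚ) • ∑ a, ∑ b, ∑ c, C a b c • amul (Pg a) (amul (ηg c) (ηg b))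

noncomputable def ghostQuadratic (e : Fin n) : SA n :=
  ∑ b, ∑ c, C e b c • amul (ηg c) (ηg b)

noncomputable def ghostGenerator (e : Fin n) : SA n :=
  ∑ a, ∑ m, C a e m • amul (Pg a) (ηg m)

lemma brstCharge_mem_odd : brstCharge C ∈ homogeneous n 1 := by
  have hηη (b c : Fin n) : amul (ηg c) (ηg b) ∈ homogeneous n 0 :=
    amul_mem_homogeneous (ηg_mem_homogeneous c) (ηg_mem_homogeneous b)
  refine sub_mem (sum_mem fun a _ => ?_) (Submodule.smul_mem _ _ (sum_mem fun a _ =>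
    sum_mem fun b _ => sum_mem fun c _ => Submodule.smul_mem _ _ ?_))
  · simpa using amul_mem_homogeneous (Gg_mem_homogeneous a) (ηg_mem_homogeneous a)
  · simpa using amul_mem_homogeneous (Pg_mem_homogeneous a) (hηη b c)

lemma dG_brstCharge (a : Fin n) : dG a (brstCharge C) = ηg a := by
  simp [brstCharge, dG_sub, dG_smul, dG_sum, dG_amul, dG_Gg, dG_ηg, dG_Pg, amul_zero_left,
    amul_zero_right, amul_ite_zero_left, amul_aone_left]

lemma dL_inr_brstCharge (e : Fin n) :
    dL (Sum.inr e) (brstCharge C) = -(1/2 : ℚ) • ghostQuadratic C e := by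
  simp [brstCharge, ghostQuadratic, dL_sub, dL_smul, dL_sum, dL_amul, dL_Gg, dL_ηg, dL_Pg,
    amul_zero_left, amul_zero_right, amul_ite_zero_left, amul_aone_left]

lemma dL_inl_brstCharge (hanti : ∀ a b c, C a b c = - C a c b) (e : Fin n) :
    dL (Sum.inl e) (brstCharge C) = Gg e - ghostGenerator C e := by
  simp only [brstCharge, ghostGenerator, one_div, dL_sub, dL_smul, dL_sum, dL_amul, dL_Gg, dL_ηg,
    dL_Pg, involute_Gg, involute_Pg, involute_ηg, Sum.inl.injEq, reduceCtorEq, ↓reduceIte,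
    amul_zero_left, amul_ite_zero_left, amul_ite_zero_right, amul_aone_left, amul_aone_right,
    amul_add_right, amul_neg_left, amul_neg_right, neg_neg, smul_add, smul_ite, smul_neg, smul_zero,
    zero_add, mem_univ, sum_ite_eq, sum_add_distrib, sum_ite_irrel, sum_const_zero, neg_smul,
    hanti _ _ e, sub_right_inj]
  module

lemma ghostQuadratic_mem_even (e : Fin n) :
    ghostQuadratic C e ∈ homogeneous n 0 :=
  sum_mem fun b _ => sum_mem fun c _ => Submodule.smul_mem _ _
    (amul_mem_homogeneous (ηg_mem_homogeneous c) (ηg_mem_homogeneous b))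

lemma amul_amul_ηg_eq_zero (a b c m : Fin n) (h : c = b ∨ m = c ∨ m = b) :
    amul (amul (ηg c) (ηg b)) (amul (Pg a) (ηg m)) = 0 := by
  rcases h with rfl | rfl | rfl <;>
    simp only [ηg_eq_single, Pg_eq_single, amul_single_single] <;> split_ifs <;>
    simp_all [amul_zero_left, amul_single_single]

/-- `(c, b, m) ↦ (m, c, b)` is an even permutation of three anticommuting ghosts. -/
lemma amul_amul_ηg_cyclic (a b c m : Fin n) :
    amul (amul (ηg c) (ηg b)) (amul (Pg a) (ηg m))
      = amul (amul (ηg m) (ηg c)) (amul (Pg a) (ηg b)) := by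
  by_cases h : c = b ∨ m = c ∨ m = b
  · rw [amul_amul_ηg_eq_zero a b c m h, amul_amul_ηg_eq_zero a c m b (by tauto)]
  · obtain ⟨hcb, hmc, hmb⟩ : c ≠ b ∧ m ≠ c ∧ m ≠ b := by tauto
    simp only [ηg_eq_single, Pg_eq_single, amul_single_single, disjoint_singleton, ne_eq,
      Sum.inl.injEq, reduceCtorEq, not_false_eq_true, if_true]
    have hd (p q r : Fin n) (hpr : p ≠ r) (hqr : q ≠ r) :
        Disjoint ({Sum.inl p} ∪ {Sum.inl q} : Finset (Fin n ⊕ Fin n))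
          ({Sum.inr a} ∪ {Sum.inl r}) := by
      simp [Ne.symm hpr, Ne.symm hqr]
    rw [if_pos hcb, if_pos hmc, amul_single_single, amul_single_single, if_pos (hd c b m
      (Ne.symm hmc) (Ne.symm hmb)), if_pos (hd m c b hmb hcb)]
    congr 1
    · ext; simp only [mem_union, mem_singleton]; tauto
    · rw [sgn_union_left _ (disjoint_singleton.2 (by simpa using hcb)),
        sgn_union_left _ (disjoint_singleton.2 (by simpa using hmc)), sgn_union_right,
        sgn_union_right, sgn_union_right, sgn_union_right]
      · rw [sgn_singleton_swap (p := Sum.inr a) (q := Sum.inl m) (by simp),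
          sgn_singleton_swap (p := Sum.inl b) (q := Sum.inl m) (by simpa using hmb.symm),
          sgn_singleton_swap (p := Sum.inl c) (q := Sum.inl m) (by simpa using hmc.symm),
          sgn_singleton_swap (p := Sum.inl b) (q := Sum.inr a) (by simp)]
        simp only [mul_one, smul_mul_smul_comm, smul_smul]
        congr 1
        ring
      all_goals simp

lemma sum_amul_ghostQuadratic_ghostGenerator (hanti : ∀ a b c, C a b c = - C a c b)
    (hjac : ∀ e a b c,
      ∑ d, (C e a d * C d b c + C e b d * C d c a + C e c d * C d a b) = 0) :
    ∑ e, amul (ghostQuadratic C e) (ghostGenerator C e) = 0 := by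
  have hexpand : ∑ e, amul (ghostQuadratic C e) (ghostGenerator C e)
      = ∑ a, ∑ m, ∑ b, ∑ c, (∑ e, C a e m * C e b c) •
          amul (amul (ηg c) (ηg b)) (amul (Pg a) (ηg m)) := by
    simp only [ghostQuadratic, ghostGenerator, amul_sum_right, amul_sum_left, amul_smul_left,
      amul_smul_right, smul_sum, smul_smul, sum_smul]
    rw [sum_comm]; refine sum_congr rfl fun a _ => ?_
    rw [sum_comm]; refine sum_congr rfl fun m _ => ?_
    rw [sum_comm]; refine sum_congr rfl fun b _ => ?_
    exact sum_comm
  rw [hexpand]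
  refine sum_eq_zero fun a _ => sum_smul_eq_zero_of_cyclic _ _
    (fun m b c => amul_amul_ηg_cyclic a b c m) fun m b c => ?_
  simp only [← sum_add_distrib, hanti a _ m, hanti a _ b, hanti a _ c]
  rw [← neg_eq_zero, ← hjac a m b c, ← sum_neg_distrib]
  exact sum_congr rfl fun d _ => by ring

lemma sum_X_smul_ghostQuadratic (hanti : ∀ a b c, C a b c = - C a c b) :
    ∑ e, (X e : MvPolynomial (Fin n) ℚ) • ghostQuadratic C e
      = -∑ a, ∑ b,
          (∑ c, C c a b • (X c : MvPolynomial (Fin n) ℚ)) • amul (ηg a) (ηg b) := by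
  simp only [ghostQuadratic, smul_sum, sum_smul, smul_assoc,
    smul_comm (X _ : MvPolynomial (Fin n) ℚ) (C _ _ _)]
  have hswap (e b c : Fin n) : C e b c • (X e : MvPolynomial (Fin n) ℚ) • amul (ηg c) (ηg b)
      = -(C e c b • (X e : MvPolynomial (Fin n) ℚ) • amul (ηg c) (ηg b)) := by
    rw [hanti, neg_smul]
  simp only [hswap, sum_neg_distrib, neg_inj]
  rw [sum_comm, sum_congr rfl fun b _ => sum_comm, sum_comm]

end Charge

end SA

open SA

/-- for a Lie algebra with structure constants `C^a_{bc}` (antisymmetric,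
satisfying the Jacobi identity), the element
`Ω = G_a η^a - ½ 𝒫_a C^a_{bc} η^c η^b` satisfies `[Ω, Ω] = 0`. -/
theorem lieAlgebra_brst_nilpotent {n : ℕ} (Cc : Fin n → Fin n → Fin n → ℚ)
    (hanti : ∀ a b c, Cc a b c = - Cc a c b)
    (hjac : ∀ e a b c,
      ∑ d, (Cc e a d * Cc d b c + Cc e b d * Cc d c a + Cc e c d * Cc d a b) = 0) :
    let Ω : SA n := (∑ a, amul (Gg a) (ηg a))
      - (1/2 : ℚ) • ∑ a, ∑ b, ∑ c, Cc a b c • amul (Pg a) (amul (ηg c) (ηg b))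
    bra (fun a b => ∑ c, Cc c a b • X c) Ω Ω = 0 := by
  show bra _ (brstCharge Cc) (brstCharge Cc) = 0
  have hterm (e : Fin n) :
      amul (-(1/2 : ℚ) • ghostQuadratic Cc e) (Gg e - ghostGenerator Cc e)
        + amul (Gg e - ghostGenerator Cc e) (-(1/2 : ℚ) • ghostQuadratic Cc e)
      = amul (ghostQuadratic Cc e) (ghostGenerator Cc e)
        - (X e : MvPolynomial (Fin n) ℚ) • ghostQuadratic Cc e := by
    rw [amul_smul_left, amul_smul_right, amul_sub_left, amul_sub_right, amul_Gg, Gg_amul,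
      ← amul_comm_of_mem_even (ghostQuadratic_mem_even Cc e), ← add_smul,
      show (-(1/2) + -(1/2) : ℚ) = -1 by norm_num, neg_one_smul, neg_sub]
  simp only [bra, dR_eq_dL_of_mem_odd (brstCharge_mem_odd Cc), dG_brstCharge, dL_inr_brstCharge,
    dL_inl_brstCharge Cc hanti, hterm, sum_sub_distrib,
    sum_amul_ghostQuadratic_ghostGenerator Cc hanti hjac, sum_X_smul_ghostQuadratic Cc hanti]
  simp
end

section
/- Consider the self-reproducing Poisson algebra with $n$ generators defined by $[G_1, G_\alpha] = G_1 G_\alpha$ for $\alpha = 2, \dots, n$ and $[G_\alpha, G_\beta] = 0$ for $\alpha, \beta \geq 2$. In the extended graded algebra with ghosts $\eta^a$ and ghost momenta $\mathcal{P}_a$ ($[\mathcal{P}_a, \eta^b] = -\delta_a{}^b$), the element $\tilde{\Omega} = \eta^a G_a - G_a \eta^a \eta^1 \mathcal{P}_1$ (summation over $a = 1,\dots,n$) satisfies $[\tilde{\Omega}, \tilde{\Omega}] = 0$. -/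
open MvPolynomial Finset

/-! Write `ψ = ∑_{α ≥ 2} G_α η^α` (index `1` of the paper is `0 : Fin n`), so that
`Ω̃ = η^a G_a + η¹ ψ 𝒫₁`. Since `∂Ω̃/∂G₁ = η¹` and the cubic part of `∂Ω̃/∂G_α` contains `η¹`, the
`G`-part of `[Ω̃, Ω̃]` is `2 G₁ η¹ ψ`. As `Ω̃` is odd, its left and right ghost derivatives agree;
the only nonzero ones are `∂Ω̃/∂𝒫₁ = η¹ ψ` and `∂Ω̃/∂η¹ = G₁ + ψ 𝒫₁`, so the ghost part is
`η¹ψ (G₁ + ψ𝒫₁) + (G₁ + ψ𝒫₁) η¹ψ = 2 G₁ η¹ ψ` as well: the cross terms vanish because `ψ² = 0`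
(the coefficients of `η^α η^β` are antisymmetric) and even monomials commute. -/

open Sum

lemma neg_one_pow_card_filter {α R : Type*} [CommMonoid R] [HasDistribNeg R] (s : Finset α)
    (p : α → Prop) [DecidablePred p] :
    (-1 : R) ^ (s.filter p).card = ∏ a ∈ s, if p a then -1 else 1 := by
  rw [Finset.prod_ite, Finset.prod_const, Finset.prod_const_one, mul_one]

theorem sum_sum_eq_zero_of_antisymm {ι M : Type*} [AddCommGroup M] [IsAddTorsionFree M]
    (s : Finset ι) {f : ι → ι → M} (h : ∀ i j, f j i = -f i j) :
    ∑ i ∈ s, ∑ j ∈ s, f i j = 0 := by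
  rw [← self_eq_neg]
  conv_lhs => rw [Finset.sum_comm]
  simp only [← Finset.sum_neg_distrib]
  exact Finset.sum_congr rfl fun j _ => Finset.sum_congr rfl fun i _ => h j i

lemma subset_and_sdiff_eq_iff {α : Type*} [DecidableEq α] {S T U : Finset α} :
    T ⊆ S ∧ S \ T = U ↔ Disjoint T U ∧ S = T ∪ U := by
  constructor
  · rintro ⟨hTS, rfl⟩
    exact ⟨Finset.disjoint_sdiff, (Finset.union_sdiff_of_subset hTS).symm⟩
  · rintro ⟨hTU, rfl⟩
    exact ⟨Finset.subset_union_left, Finset.union_sdiff_cancel_left hTU⟩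

lemma insert_eq_iff_of_notMem {α : Type*} [DecidableEq α] {i : α} {S T : Finset α}
    (hi : i ∉ S) : insert i S = T ↔ i ∈ T ∧ S = T.erase i := by
  constructor
  · rintro rfl
    exact ⟨Finset.mem_insert_self i S, (Finset.erase_insert hi).symm⟩
  · rintro ⟨hiT, rfl⟩
    exact Finset.insert_erase hiT

section Monomial
variable {n : ℕ}

@[simp] lemma idx_inl_lt_idx_inl {a b : Fin n} : idx (inl a) < idx (inl b) ↔ a < b := Iff.rfl

@[simp] lemma idx_inr_lt_idx_inr {a b : Fin n} : idx (inr a) < idx (inr b) ↔ a < b :=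
  Nat.add_lt_add_iff_left

@[simp] lemma idx_inl_lt_idx_inr (a b : Fin n) : idx (inl a) < idx (inr b) :=
  Nat.lt_add_right _ a.isLt

@[simp] lemma not_idx_inr_lt_idx_inl (a b : Fin n) : ¬ idx (inr b) < idx (inl a) :=
  fun h => (idx_inl_lt_idx_inr a b).asymm h

lemma idx_injective : Function.Injective (idx (n := n)) := by
  rintro (a | a) (b | b) h <;> simp only [idx] at h <;> [exact congrArg inl (Fin.ext h); omega;
    omega; exact congrArg inr (Fin.ext (by omega))]

lemma sgn_eq_prod (T U : Finset (Fin n ⊕ Fin n)) :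
    sgn T U = ∏ t ∈ T, ∏ u ∈ U, if idx u < idx t then -1 else 1 := by
  rw [sgn, neg_one_pow_card_filter, Finset.prod_product]

lemma sgn_mul_sgn_swap {T U : Finset (Fin n ⊕ Fin n)} (h : Disjoint T U) :
    sgn T U * sgn U T = (-1) ^ (T.card * U.card) := by
  have opposite : ∀ t ∈ T, ∀ u ∈ U,
      ((if idx u < idx t then -1 else 1) * (if idx t < idx u then -1 else 1) : ℚ) = -1 := by
    intro t ht u hu
    have hne : idx u ≠ idx t :=
      idx_injective.ne fun hut => Finset.disjoint_left.mp h ht (hut ▸ hu)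
    rcases hne.lt_or_gt with hlt | hlt <;> simp [hlt, hlt.not_gt]
  rw [sgn_eq_prod, sgn_eq_prod, Finset.prod_comm (s := U), ← Finset.prod_mul_distrib]
  simp_rw [← Finset.prod_mul_distrib]
  rw [Finset.prod_congr rfl fun t ht => Finset.prod_congr rfl (opposite t ht)]
  simp only [Finset.prod_const, ← pow_mul, mul_comm]

lemma sgn_mul_self (T U : Finset (Fin n ⊕ Fin n)) : sgn T U * sgn T U = 1 := by
  rw [sgn, ← pow_add]
  exact (Even.add_self _).neg_one_pow

noncomputable def mono (T : Finset (Fin n ⊕ Fin n)) (p : MvPolynomial (Fin n) ℚ) : SA n :=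
  fun S => if S = T then p else 0

@[simp] lemma mono_zero (T : Finset (Fin n ⊕ Fin n)) : mono T (0 : MvPolynomial (Fin n) ℚ) = 0 := by
  funext S; simp [mono]

lemma mono_neg (T : Finset (Fin n ⊕ Fin n)) (p : MvPolynomial (Fin n) ℚ) :
    mono T (-p) = -mono T p := by
  funext S; simp only [mono, Pi.neg_apply]; split_ifs <;> simp

lemma smul_mono (c : MvPolynomial (Fin n) ℚ) (T : Finset (Fin n ⊕ Fin n)) (p) :
    c • mono T p = mono T (c * p) := by
  funext S; simp only [mono, Pi.smul_apply, smul_eq_mul]; split_ifs <;> simp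

lemma amul_mono_mono (T U : Finset (Fin n ⊕ Fin n)) (p q : MvPolynomial (Fin n) ℚ) :
    amul (mono T p) (mono U q) =
      if Disjoint T U then mono (T ∪ U) (sgn T U • (p * q)) else 0 := by
  funext S
  simp only [amul, mono, ite_mul, zero_mul, smul_ite, smul_zero]
  rw [Finset.sum_ite_eq']
  simp only [Finset.mem_powerset]
  by_cases hTU : Disjoint T U ∧ S = T ∪ U
  · obtain ⟨hd, rfl⟩ := hTU
    simp [hd, mono, Finset.union_sdiff_cancel_left hd]
  · have := mt subset_and_sdiff_eq_iff.mp hTU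
    split_ifs <;> simp_all [mono]

lemma ηg_eq_mono (a : Fin n) : ηg a = mono {inl a} 1 := rfl

lemma Gg_eq_mono (a : Fin n) : Gg a = mono ∅ (X a) := rfl

lemma Pg_eq_mono (a : Fin n) : Pg a = mono {inr a} 1 := rfl

lemma amul_mono_comm_of_even {T U : Finset (Fin n ⊕ Fin n)} (h : Even (T.card * U.card))
    (p q : MvPolynomial (Fin n) ℚ) : amul (mono T p) (mono U q) = amul (mono U q) (mono T p) := by
  rw [amul_mono_mono, amul_mono_mono]
  by_cases hd : Disjoint T U
  · have hswap := sgn_mul_sgn_swap hd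
    rw [h.neg_one_pow] at hswap
    rw [if_pos hd, if_pos hd.symm, Finset.union_comm, mul_comm q p, ← mul_one (sgn T U),
      ← sgn_mul_self U T, ← mul_assoc, hswap, one_mul]
  · rw [if_neg hd, if_neg fun hd' => hd hd'.symm]

lemma amul_zero (x : SA n) : amul x 0 = 0 := by
  funext S; simp [amul]

lemma zero_amul (y : SA n) : amul 0 y = 0 := by
  funext S; simp [amul]

lemma amul_add (x y z : SA n) : amul x (y + z) = amul x y + amul x z := by
  funext S; simp [amul, mul_add, Finset.sum_add_distrib]

lemma add_amul (x y z : SA n) : amul (x + y) z = amul x z + amul y z := by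
  funext S; simp [amul, add_mul, Finset.sum_add_distrib]

lemma amul_sum {ι : Type*} (x : SA n) (s : Finset ι) (f : ι → SA n) :
    amul x (∑ i ∈ s, f i) = ∑ i ∈ s, amul x (f i) := by
  funext S
  simp only [amul, Finset.sum_apply, Finset.mul_sum, Finset.smul_sum]
  exact Finset.sum_comm

lemma sum_amul {ι : Type*} (y : SA n) (s : Finset ι) (f : ι → SA n) :
    amul (∑ i ∈ s, f i) y = ∑ i ∈ s, amul (f i) y := by
  funext S
  simp only [amul, Finset.sum_apply, Finset.sum_mul, Finset.smul_sum]
  exact Finset.sum_comm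

lemma dG_add (c : Fin n) (x y : SA n) : dG c (x + y) = dG c x + dG c y := by
  funext S; simp [dG]

lemma dG_sum {ι : Type*} (c : Fin n) (s : Finset ι) (f : ι → SA n) :
    dG c (∑ i ∈ s, f i) = ∑ i ∈ s, dG c (f i) := by
  funext S; simp [dG, Finset.sum_apply]

lemma dR_add (i : Fin n ⊕ Fin n) (x y : SA n) : dR i (x + y) = dR i x + dR i y := by
  funext S; simp only [dR, Pi.add_apply, smul_add]; split_ifs <;> simp

@[simp] lemma dR_zero (i : Fin n ⊕ Fin n) : dR i (0 : SA n) = 0 := by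
  funext S; simp [dR]

lemma dR_sum {ι : Type*} (i : Fin n ⊕ Fin n) (s : Finset ι) (f : ι → SA n) :
    dR i (∑ j ∈ s, f j) = ∑ j ∈ s, dR i (f j) := by
  funext S; simp only [dR, Finset.sum_apply, Finset.smul_sum]; split_ifs <;> simp

lemma dG_mono (c : Fin n) (T : Finset (Fin n ⊕ Fin n)) (p : MvPolynomial (Fin n) ℚ) :
    dG c (mono T p) = mono T (pderiv c p) := by
  funext S; simp only [dG, mono]; split_ifs <;> simp

lemma dR_mono (i : Fin n ⊕ Fin n) (T : Finset (Fin n ⊕ Fin n)) (p : MvPolynomial (Fin n) ℚ) :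
    dR i (mono T p) = if i ∈ T then
      mono (T.erase i) (((-1 : ℚ) ^ ((T.erase i).filter (fun j => idx i < idx j)).card) • p)
    else 0 := by
  funext S
  by_cases hiS : i ∈ S
  · have : S ≠ T.erase i := fun h => Finset.notMem_erase i T (h ▸ hiS)
    simp only [dR, hiS, if_true]
    split_ifs <;> simp [mono, this]
  · simp only [dR, mono, hiS, if_false, insert_eq_iff_of_notMem hiS]
    split_ifs <;> simp_all [mono]

def IsGrassmannOdd (x : SA n) : Prop := ∀ S : Finset (Fin n ⊕ Fin n), Even S.card → x S = 0

lemma IsGrassmannOdd.add {x y : SA n} (hx : IsGrassmannOdd x) (hy : IsGrassmannOdd y) :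
    IsGrassmannOdd (x + y) := fun S hS => by simp [hx S hS, hy S hS]

lemma IsGrassmannOdd.sum {ι : Type*} (s : Finset ι) {f : ι → SA n}
    (hf : ∀ i ∈ s, IsGrassmannOdd (f i)) : IsGrassmannOdd (∑ i ∈ s, f i) := fun S hS => by
  simp [Finset.sum_apply, Finset.sum_eq_zero fun i hi => hf i hi S hS]

lemma isGrassmannOdd_mono {T : Finset (Fin n ⊕ Fin n)} (hT : Odd T.card)
    (p : MvPolynomial (Fin n) ℚ) : IsGrassmannOdd (mono T p) := fun S hS => by
  have : S ≠ T := by rintro rfl; exact Nat.not_even_iff_odd.mpr hT hS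
  simp [mono, this]

-- On an odd monomial containing `i`, as many generators precede `i` as follow it, modulo two.
lemma dL_eq_dR_of_isGrassmannOdd {x : SA n} (hx : IsGrassmannOdd x) (i : Fin n ⊕ Fin n) :
    dL i x = dR i x := by
  funext S
  by_cases hiS : i ∈ S
  · simp [dL, dR, hiS]
  rcases Nat.even_or_odd S.card with hS | hS
  · have hsplit : (S.filter fun j => idx j < idx i).card + (S.filter fun j => idx i < idx j).card
        = S.card := by
      rw [← Finset.card_filter_add_card_filter_not (s := S) (fun j => idx j < idx i)]
      congr 2
      refine Finset.filter_congr fun j hj => ?_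
      have : idx j ≠ idx i := idx_injective.ne fun h => hiS (h ▸ hj)
      omega
    simp only [dL, dR, hiS, if_false]
    congr 1
    obtain ⟨k, hk⟩ := hS
    rw [neg_one_pow_eq_pow_mod_two, neg_one_pow_eq_pow_mod_two (n := (S.filter _).card)]
    congr 1
    omega
  · have : x (insert i S) = 0 := hx _ (by rw [Finset.card_insert_of_notMem hiS]; exact hS.add_one)
    simp [dL, dR, hiS, this]

end Monomial

section SelfReproducing
variable {n : ℕ} [NeZero n]

noncomputable def structConst : Fin n → Fin n → MvPolynomial (Fin n) ℚ := fun a b =>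
  if a = b then 0
  else if a = 0 then X 0 * X b
  else if b = 0 then -(X 0 * X a)
  else 0

noncomputable def brstCharge : SA n :=
  (∑ a, amul (ηg a) (Gg a)) - ∑ a, amul (Gg a) (amul (ηg a) (amul (ηg 0) (Pg 0)))

-- `ψ = ∑ a, cubicCoeff a • η^a`; the `a = 0` cubic term of `Ω̃` vanishes as `(η¹)² = 0`.
noncomputable def cubicCoeff (a : Fin n) : MvPolynomial (Fin n) ℚ := if a = 0 then 0 else X a

@[simp] lemma cubicCoeff_zero : cubicCoeff (0 : Fin n) = 0 := if_pos rfl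

lemma cubicCoeff_of_ne_zero {a : Fin n} (ha : a ≠ 0) : cubicCoeff a = X a := if_neg ha

lemma structConst_eq (a b : Fin n) :
    structConst a b = (if a = 0 then X 0 * cubicCoeff b else 0)
      - (if b = 0 then X 0 * cubicCoeff a else 0) := by
  unfold structConst cubicCoeff
  split_ifs <;> simp_all

lemma brstCharge_eq_sum : (brstCharge : SA n) =
    ∑ a, (mono {inl a} (X a) + mono {inl 0, inl a, inr 0} (cubicCoeff a)) := by
  rw [brstCharge, ← Finset.sum_sub_distrib]
  refine Finset.sum_congr rfl fun a _ => ?_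
  simp only [ηg_eq_mono, Gg_eq_mono, Pg_eq_mono]
  rcases eq_or_ne a 0 with rfl | ha
  · simp [amul_mono_mono, amul_zero, sgn_eq_prod]
  · simp [amul_mono_mono, ha, cubicCoeff_of_ne_zero ha, sgn_eq_prod, Fin.pos_iff_ne_zero]
    rw [mono_neg, sub_neg_eq_add]

lemma isGrassmannOdd_brstCharge : IsGrassmannOdd (brstCharge : SA n) := by
  rw [brstCharge_eq_sum]
  refine IsGrassmannOdd.sum _ fun a _ => ?_
  rcases eq_or_ne a 0 with rfl | ha
  · simpa using isGrassmannOdd_mono (by simp) _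
  · refine (isGrassmannOdd_mono (by simp) _).add (isGrassmannOdd_mono ?_ _)
    rw [Finset.card_insert_of_notMem (by simp [Ne.symm ha]), Finset.card_pair (by simp)]
    decide

lemma dG_brstCharge (c : Fin n) : dG c brstCharge =
    mono {inl c} 1 + mono {inl 0, inl c, inr 0} (if c = 0 then 0 else 1) := by
  rw [brstCharge_eq_sum, dG_sum, Finset.sum_eq_single c]
  · simp only [dG_add, dG_mono, pderiv_X_self, cubicCoeff]
    split_ifs <;> simp
  · intro a _ hac
    simp only [dG_add, dG_mono, pderiv_X_of_ne hac, cubicCoeff]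
    split_ifs <;> simp [pderiv_X_of_ne hac]
  · simp

lemma dR_inr_brstCharge (c : Fin n) : dR (inr c) brstCharge =
    if c = 0 then ∑ a, mono {inl 0, inl a} (cubicCoeff a) else 0 := by
  rw [brstCharge_eq_sum, dR_sum]
  split_ifs with hc
  · subst hc
    refine Finset.sum_congr rfl fun a _ => ?_
    simp [dR_add, dR_mono, Finset.erase_insert_of_ne, Finset.filter_insert, Finset.filter_singleton]
  · refine Finset.sum_eq_zero fun a _ => ?_
    simp [dR_add, dR_mono, hc]

lemma dR_inl_zero_brstCharge : dR (inl 0) brstCharge =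
    mono ∅ (X 0) + ∑ a : Fin n, mono {inl a, inr 0} (cubicCoeff a) := by
  rw [brstCharge_eq_sum, dR_sum]
  simp only [dR_add, Finset.sum_add_distrib]
  congr 1
  · rw [Finset.sum_eq_single 0 (fun a _ ha => by simp [dR_mono, Ne.symm ha]) (by simp)]
    simp [dR_mono]
  · refine Finset.sum_congr rfl fun a _ => ?_
    rcases eq_or_ne a 0 with rfl | ha
    · simp
    · simp [dR_mono, Finset.erase_eq_of_notMem, Finset.filter_insert, Finset.filter_singleton,
        ha, Ne.symm ha, Fin.pos_iff_ne_zero]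

lemma amul_etaPsi_psiP_summand_antisymm (a b : Fin n) :
    amul (mono {inl 0, inl b} (cubicCoeff b)) (mono {inl a, inr 0} (cubicCoeff a)) =
      -amul (mono {inl 0, inl a} (cubicCoeff a)) (mono {inl b, inr 0} (cubicCoeff b)) := by
  rcases eq_or_ne a 0 with rfl | ha
  · simp [amul_zero, zero_amul]
  rcases eq_or_ne b 0 with rfl | hb
  · simp [amul_zero, zero_amul]
  rcases eq_or_ne a b with rfl | hab
  · simp [amul_mono_mono]
  have hunion : ({inl 0, inl b} ∪ {inl a, inr 0} : Finset (Fin n ⊕ Fin n)) =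
      {inl 0, inl a} ∪ {inl b, inr 0} := by
    ext x; simp only [Finset.mem_union, Finset.mem_insert, Finset.mem_singleton]; tauto
  rw [amul_mono_mono, amul_mono_mono, hunion]
  simp [ha, hb, hab, Ne.symm ha, Ne.symm hb, Ne.symm hab, sgn_eq_prod]
  rw [← mono_neg, mul_comm (cubicCoeff a)]
  rcases hab.lt_or_gt with hlt | hlt <;> simp [hlt, hlt.not_gt]

lemma amul_etaPsi_psiP_eq_zero :
    amul (∑ b, mono {inl 0, inl b} (cubicCoeff b)) (∑ a, mono {inl a, inr 0} (cubicCoeff a)) =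
      (0 : SA n) := by
  simp only [sum_amul, amul_sum]
  apply sum_sum_eq_zero_of_antisymm
  intro i j
  exact amul_etaPsi_psiP_summand_antisymm j i

lemma amul_psiP_etaPsi_eq_zero :
    amul (∑ a, mono {inl a, inr 0} (cubicCoeff a)) (∑ b, mono {inl 0, inl b} (cubicCoeff b)) =
      (0 : SA n) := by
  rw [← amul_etaPsi_psiP_eq_zero]
  simp only [sum_amul, amul_sum]
  rw [Finset.sum_comm]
  refine Finset.sum_congr rfl fun b _ => Finset.sum_congr rfl fun a _ => ?_
  exact amul_mono_comm_of_even (by simp) _ _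

-- `G₁ η¹ ψ`
noncomputable def halfBracket : SA n := ∑ a, mono {inl 0, inl a} (X 0 * cubicCoeff a)

lemma ghostPart_brstCharge :
    ∑ a, (amul (dR (inr a) brstCharge) (dL (inl a) brstCharge)
      + amul (dR (inl a) brstCharge) (dL (inr a) brstCharge)) =
      (halfBracket + halfBracket : SA n) := by
  simp only [dL_eq_dR_of_isGrassmannOdd isGrassmannOdd_brstCharge]
  rw [Finset.sum_eq_single 0 (fun a _ ha => by simp [dR_inr_brstCharge, ha, amul_zero, zero_amul])
    (by simp)]
  simp only [dR_inr_brstCharge, if_true, dR_inl_zero_brstCharge, amul_add, add_amul,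
    amul_etaPsi_psiP_eq_zero, amul_psiP_etaPsi_eq_zero, add_zero]
  rw [halfBracket, sum_amul, amul_sum]
  congr 1 <;> refine Finset.sum_congr rfl fun a _ => ?_ <;>
    simp [amul_mono_mono, sgn_eq_prod, mul_comm]

lemma gPart_brstCharge :
    ∑ a, ∑ b, structConst a b • amul (dG a brstCharge) (dG b brstCharge) =
      (halfBracket + halfBracket : SA n) := by
  simp only [structConst_eq, sub_smul, ite_smul, zero_smul, Finset.sum_sub_distrib,
    Finset.sum_ite_eq', Finset.mem_univ, if_true]
  rw [Finset.sum_comm]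
  simp only [Finset.sum_ite_eq', Finset.mem_univ, if_true]
  have left : ∀ b : Fin n, (X 0 * cubicCoeff b) • amul (dG 0 brstCharge) (dG b brstCharge) =
      mono {inl 0, inl b} (X 0 * cubicCoeff b) := by
    intro b
    rcases eq_or_ne b 0 with rfl | hb
    · simp
    · simp [dG_brstCharge, hb, Ne.symm hb, amul_add, amul_mono_mono, sgn_eq_prod, smul_mono]
  have right : ∀ a : Fin n, (X 0 * cubicCoeff a) • amul (dG a brstCharge) (dG 0 brstCharge) =
      -mono {inl 0, inl a} (X 0 * cubicCoeff a) := by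
    intro a
    rcases eq_or_ne a 0 with rfl | ha
    · simp
    · simp [dG_brstCharge, ha, add_amul, amul_mono_mono, sgn_eq_prod, smul_mono,
        Fin.pos_iff_ne_zero]
      rw [Finset.pair_comm, mono_neg]
  simp only [left, right, Finset.sum_neg_distrib, sub_neg_eq_add, halfBracket]

end SelfReproducing

/-- for the self-reproducing algebra `[G₁, G_α] = G₁ G_α`
(`α = 2,…,n`), `[G_α, G_β] = 0`, the non-covariant BRST charge
`Ω̃ = η^a G_a - G_a η^a η^1 𝒫₁` is nilpotent: `[Ω̃, Ω̃] = 0`.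
(Generator `G₁` of the paper is `Gg 0` here.) -/
theorem minimal_rank_one_brst {n : ℕ} [NeZero n] :
    let C : Fin n → Fin n → MvPolynomial (Fin n) ℚ := fun a b =>
      if a = b then 0
      else if a = 0 then X 0 * X b
      else if b = 0 then -(X 0 * X a)
      else 0
    let Ω : SA n := (∑ a, amul (ηg a) (Gg a))
      - ∑ a, amul (Gg a) (amul (ηg a) (amul (ηg 0) (Pg 0)))
    bra C Ω Ω = 0 := by
  intro C Ω
  change bra structConst brstCharge brstCharge = 0
  rw [bra, gPart_brstCharge, ghostPart_brstCharge, sub_self]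
end

section
/- Let $\mathfrak{g}$ be a semisimple Lie algebra with basis $(L_a)$ and Killing form inverse $k^{ab}$, and let $(T_b)_{b \in B}$ be additional generators. Define the bracket $[L_a, L_{a'}] = C^c{}_{aa'} L_c$, $[L_a, T_b] = 0$, and $[T_{b_1}, T_{b_2}] = \delta_{b_1 b_2} k^{a_1 a_2} L_{a_1} L_{a_2}$, extended to the polynomial algebra in the $L$'s and $T$'s by the Leibniz rule. Then this bracket satisfies the Jacobi identity. -/
open MvPolynomial Finset

/-- The Killing form `k_{ab} = C^c_{ad} C^d_{bc}`. -/
noncomputable def killing {n : ℕ} (Cc : Fin n → Fin n → Fin n → ℂ)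
    (a b : Fin n) : ℂ :=
  ∑ c, ∑ d, Cc c a d * Cc d b c

/-- The bracket on the polynomial algebra in the `L`'s (variables `Sum.inl a`) and
`T`'s (variables `Sum.inr b`), determined by `[L_a, L_{a'}] = C^c_{aa'} L_c`,
`[L_a, T_b] = 0`, `[T_{b₁}, T_{b₂}] = δ_{b₁b₂} k^{a₁a₂} L_{a₁} L_{a₂}`,
extended by the Leibniz rule. -/
noncomputable def ltBracket {n m : ℕ} (Cc : Fin n → Fin n → Fin n → ℂ)
    (kInv : Fin n → Fin n → ℂ)
    (f g : MvPolynomial (Fin n ⊕ Fin m) ℂ) : MvPolynomial (Fin n ⊕ Fin m) ℂ :=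
  (∑ a, ∑ a', ∑ c, Cc c a a' •
      (X (Sum.inl c) * ((pderiv (Sum.inl a)) f * (pderiv (Sum.inl a')) g)))
  + ∑ b : Fin m,
      (∑ a1, ∑ a2, kInv a1 a2 • (X (Sum.inl a1) * X (Sum.inl a2))) *
        ((pderiv (Sum.inr b)) f * (pderiv (Sum.inr b)) g)

/-! Since the bracket is a biderivation, `{f, L_e} = C^c_{ae} L_c ∂f/∂L_a` and
`{f, T_t} = Q ∂f/∂T_t`, where `Q = k^{a₁a₂} L_{a₁} L_{a₂}` is the Casimir. On generators the
all-`L` Jacobi sum is the Jacobi identity of the structure constants; with one `T` every term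
vanishes, because `[L, T] = 0` and `∂/∂T` kills polynomials in the `L`'s; with two or three `T`'s
the only surviving terms are multiples of `{Q, T_t} = 0` and `{Q, L_e}`. Invariance
`κ ad_a + ad_aᵀ κ = 0` of the Killing form passes to its inverse, `ad_a k + k ad_aᵀ = 0`, so the
quadratic form `{Q, L_e}` has a skew coefficient matrix and vanishes. -/

open scoped Matrix

namespace Matrix

variable {ι R : Type*} [Fintype ι] [DecidableEq ι] [CommRing R]

theorem mul_add_mul_transpose_eq_zero_of_mul_eq_one {κ A K : Matrix ι ι R}
    (hA : κ * A + Aᵀ * κ = 0) (hK : κ * K = 1) : A * K + K * Aᵀ = 0 := by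
  have hK' : K * κ = 1 := mul_eq_one_comm.mp hK
  calc A * K + K * Aᵀ = K * κ * A * K + K * Aᵀ * (κ * K) := by
        rw [hK, hK', one_mul, mul_one]
    _ = K * (κ * A + Aᵀ * κ) * K := by noncomm_ring
    _ = 0 := by rw [hA, mul_zero, zero_mul]

end Matrix

theorem sum_sum_smul_mul_eq_zero_of_transpose_eq_neg {ι 𝕜 A : Type*} [Fintype ι] [Ring 𝕜]
    [CommRing A] [IsAddTorsionFree A] [Module 𝕜 A] {N : Matrix ι ι 𝕜} (hN : Nᵀ = -N)
    (x : ι → A) : ∑ i, ∑ j, N i j • (x i * x j) = 0 := by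
  refine self_eq_neg.mp ?_
  calc ∑ i, ∑ j, N i j • (x i * x j) = ∑ i, ∑ j, N j i • (x j * x i) := Finset.sum_comm
    _ = -∑ i, ∑ j, N i j • (x i * x j) := by
      simp only [← Finset.sum_neg_distrib, ← neg_smul]
      refine Finset.sum_congr rfl fun i _ => Finset.sum_congr rfl fun j _ => ?_
      rw [← Matrix.transpose_apply N i j, hN, mul_comm, Matrix.neg_apply]

def adMatrix {n : ℕ} (Cc : Fin n → Fin n → Fin n → ℂ) (a : Fin n) :
    Matrix (Fin n) (Fin n) ℂ :=
  Matrix.of fun c b => Cc c a b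

section StructureConstants

variable {n : ℕ} {Cc : Fin n → Fin n → Fin n → ℂ} {kInv : Fin n → Fin n → ℂ}

theorem killing_mul_adMatrix_add_transpose_mul_killing_eq_zero
    (hinvariant : ∀ a b c, ∑ d, (Cc d a b * killing Cc d c + Cc d a c * killing Cc b d) = 0)
    (a : Fin n) :
    Matrix.of (killing Cc) * adMatrix Cc a + (adMatrix Cc a)ᵀ * Matrix.of (killing Cc) = 0 := by
  ext b c
  simpa [adMatrix, Matrix.mul_apply, Finset.sum_add_distrib, mul_comm, add_comm]
    using hinvariant a b c

theorem killing_mul_kInv_eq_one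
    (hkInv : ∀ a c, ∑ b, killing Cc a b * kInv b c = if a = c then 1 else 0) :
    Matrix.of (killing Cc) * Matrix.of kInv = 1 := by
  ext a c
  simpa [Matrix.mul_apply, Matrix.one_apply] using hkInv a c

theorem transpose_adMatrix_mul_kInv_add_transpose_eq_neg
    (hkInv : ∀ a c, ∑ b, killing Cc a b * kInv b c = if a = c then 1 else 0)
    (hinvariant : ∀ a b c, ∑ d, (Cc d a b * killing Cc d c + Cc d a c * killing Cc b d) = 0)
    (a : Fin n) :
    (adMatrix Cc a * (Matrix.of kInv + (Matrix.of kInv)ᵀ))ᵀ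
      = -(adMatrix Cc a * (Matrix.of kInv + (Matrix.of kInv)ᵀ)) := by
  set A := adMatrix Cc a
  set K := Matrix.of kInv
  have hAK : A * K + K * Aᵀ = 0 := Matrix.mul_add_mul_transpose_eq_zero_of_mul_eq_one
    (killing_mul_adMatrix_add_transpose_mul_killing_eq_zero hinvariant a)
    (killing_mul_kInv_eq_one hkInv)
  rw [← add_eq_zero_iff_eq_neg]
  calc (A * (K + Kᵀ))ᵀ + A * (K + Kᵀ) = (A * K + K * Aᵀ) + (A * K + K * Aᵀ)ᵀ := by
        simp only [Matrix.transpose_mul, Matrix.transpose_add, Matrix.transpose_transpose,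
          mul_add]
        abel
    _ = 0 := by rw [hAK, Matrix.transpose_zero, add_zero]

end StructureConstants

noncomputable def casimir {n m : ℕ} (kInv : Fin n → Fin n → ℂ) :
    MvPolynomial (Fin n ⊕ Fin m) ℂ :=
  ∑ a1, ∑ a2, kInv a1 a2 • (X (Sum.inl a1) * X (Sum.inl a2))

section Bracket

variable {n m : ℕ} (Cc : Fin n → Fin n → Fin n → ℂ) (kInv : Fin n → Fin n → ℂ)

theorem ltBracket_X_inl (f : MvPolynomial (Fin n ⊕ Fin m) ℂ) (e : Fin n) :
    ltBracket Cc kInv f (X (Sum.inl e))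
      = ∑ a, ∑ c, Cc c a e • (X (Sum.inl c) * pderiv (Sum.inl a) f) := by
  simp [ltBracket, pderiv_X, Pi.single_apply]

theorem ltBracket_X_inr (f : MvPolynomial (Fin n ⊕ Fin m) ℂ) (t : Fin m) :
    ltBracket Cc kInv f (X (Sum.inr t)) = casimir kInv * pderiv (Sum.inr t) f := by
  simp [ltBracket, casimir, pderiv_X, Pi.single_apply]

theorem ltBracket_zero_left (g : MvPolynomial (Fin n ⊕ Fin m) ℂ) :
    ltBracket Cc kInv 0 g = 0 := by
  simp [ltBracket]

theorem ltBracket_X_inl_X_inl (a b : Fin n) :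
    ltBracket (m := m) Cc kInv (X (Sum.inl a)) (X (Sum.inl b))
      = ∑ c, Cc c a b • X (Sum.inl c) := by
  simp [ltBracket_X_inl, pderiv_X, Pi.single_apply]

theorem ltBracket_X_inr_X_inl (r : Fin m) (e : Fin n) :
    ltBracket Cc kInv (X (Sum.inr r)) (X (Sum.inl e)) = 0 := by
  simp [ltBracket_X_inl, pderiv_X]

theorem ltBracket_X_inl_X_inr (a : Fin n) (t : Fin m) :
    ltBracket Cc kInv (X (Sum.inl a)) (X (Sum.inr t)) = 0 := by
  simp [ltBracket_X_inr, pderiv_X]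

theorem ltBracket_X_inr_X_inr (r t : Fin m) :
    ltBracket Cc kInv (X (Sum.inr r)) (X (Sum.inr t)) = if r = t then casimir kInv else 0 := by
  simp [ltBracket_X_inr, pderiv_X, Pi.single_apply]

theorem ltBracket_linear_X_inl (v : Fin n → ℂ) (e : Fin n) :
    ltBracket (m := m) Cc kInv (∑ d, v d • X (Sum.inl d)) (X (Sum.inl e))
      = ∑ c, (∑ d, v d * Cc c d e) • X (Sum.inl c) := by
  simp only [ltBracket_X_inl, map_sum, Derivation.map_smul, pderiv_X, Pi.single_apply,
    Sum.inl.injEq, smul_ite, smul_zero, Finset.sum_ite_eq', Finset.mem_univ, if_true,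
    mul_smul_comm, mul_one]
  rw [Finset.sum_comm]
  simp only [smul_smul, mul_comm, Finset.sum_smul]

theorem ltBracket_linear_X_inr (v : Fin n → ℂ) (t : Fin m) :
    ltBracket Cc kInv (∑ d, v d • X (Sum.inl d)) (X (Sum.inr t)) = 0 := by
  simp [ltBracket_X_inr, pderiv_X]

theorem pderiv_inr_casimir (t : Fin m) :
    pderiv (Sum.inr t) (casimir (m := m) kInv) = 0 := by
  simp [casimir, pderiv_X]

theorem pderiv_inl_casimir (p : Fin n) :
    pderiv (Sum.inl p) (casimir (m := m) kInv)
      = ∑ q, (kInv p q + kInv q p) • X (Sum.inl q) := by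
  simp [casimir, pderiv_X, Pi.single_apply, add_smul, Finset.sum_add_distrib, mul_comm, add_comm]

theorem ltBracket_casimir_X_inr (t : Fin m) :
    ltBracket Cc kInv (casimir kInv) (X (Sum.inr t)) = 0 := by
  rw [ltBracket_X_inr, pderiv_inr_casimir, mul_zero]

theorem ltBracket_casimir_X_inl (hanti : ∀ c a b, Cc c a b = - Cc c b a)
    (hkInv : ∀ a c, ∑ b, killing Cc a b * kInv b c = if a = c then 1 else 0)
    (hinvariant : ∀ a b c, ∑ d, (Cc d a b * killing Cc d c + Cc d a c * killing Cc b d) = 0)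
    (e : Fin n) : ltBracket Cc kInv (casimir (m := m) kInv) (X (Sum.inl e)) = 0 := by
  set N := -(adMatrix Cc e * (Matrix.of kInv + (Matrix.of kInv)ᵀ))
  have hN : Nᵀ = -N := by
    rw [Matrix.transpose_neg, transpose_adMatrix_mul_kInv_add_transpose_eq_neg hkInv hinvariant]
  calc ltBracket Cc kInv (casimir kInv) (X (Sum.inl e))
      = ∑ p, ∑ c, Cc c p e •
          (X (Sum.inl c) * ∑ q, (kInv p q + kInv q p) • X (Sum.inl q)) := by
        simp only [ltBracket_X_inl, pderiv_inl_casimir]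
    _ = ∑ c, ∑ q, (∑ p, Cc c p e * (kInv p q + kInv q p)) •
          (X (Sum.inl c) * X (Sum.inl q)) := by
        simp only [Finset.mul_sum, mul_smul_comm, Finset.smul_sum, smul_smul, Finset.sum_smul]
        rw [Finset.sum_comm]
        exact Finset.sum_congr rfl fun c _ => Finset.sum_comm
    _ = ∑ c, ∑ q, N c q • (X (Sum.inl c) * X (Sum.inl q)) := by
        simp [N, adMatrix, Matrix.mul_apply, hanti _ _ e, Finset.sum_neg_distrib]
    _ = 0 := sum_sum_smul_mul_eq_zero_of_transpose_eq_neg hN _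

theorem ltBracket_jacobi_X_inl
    (hjac : ∀ a b c e, ∑ d,
      (Cc d a b * Cc e d c + Cc d b c * Cc e d a + Cc d c a * Cc e d b) = 0)
    (a b e : Fin n) :
    ltBracket (m := m) Cc kInv (ltBracket Cc kInv (X (Sum.inl a)) (X (Sum.inl b)))
        (X (Sum.inl e))
      + ltBracket Cc kInv (ltBracket Cc kInv (X (Sum.inl b)) (X (Sum.inl e))) (X (Sum.inl a))
      + ltBracket Cc kInv (ltBracket Cc kInv (X (Sum.inl e)) (X (Sum.inl a))) (X (Sum.inl b))
      = 0 := by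
  simp only [ltBracket_X_inl_X_inl, ltBracket_linear_X_inl, ← Finset.sum_add_distrib,
    ← add_smul]
  exact Finset.sum_eq_zero fun c _ => by rw [hjac a b e c, zero_smul]

end Bracket

theorem lt_bracket_jacobi_general {n m : ℕ} (Cc : Fin n → Fin n → Fin n → ℂ)
    (hanti : ∀ c a b, Cc c a b = - Cc c b a)
    (hjac : ∀ a b c e, ∑ d,
      (Cc d a b * Cc e d c + Cc d b c * Cc e d a + Cc d c a * Cc e d b) = 0)
    (kInv : Fin n → Fin n → ℂ)
    (hkInv : ∀ a c, ∑ b, killing Cc a b * kInv b c = if a = c then 1 else 0)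
    (hinvariant : ∀ a b c, ∑ d,
      (Cc d a b * killing Cc d c + Cc d a c * killing Cc b d) = 0) :
    ∀ i j k : Fin n ⊕ Fin m,
      ltBracket (m := m) Cc kInv (ltBracket Cc kInv (X i) (X j)) (X k)
      + ltBracket (m := m) Cc kInv (ltBracket Cc kInv (X j) (X k)) (X i)
      + ltBracket (m := m) Cc kInv (ltBracket Cc kInv (X k) (X i)) (X j) = 0 := by
  have hQL := ltBracket_casimir_X_inl (m := m) Cc kInv hanti hkInv hinvariant
  rintro (a | r) (b | s) (e | t)
  case inl.inl.inl => exact ltBracket_jacobi_X_inl Cc kInv hjac a b e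
  all_goals simp only [ltBracket_X_inl_X_inl, ltBracket_X_inl_X_inr, ltBracket_X_inr_X_inl,
    ltBracket_X_inr_X_inr, ltBracket_linear_X_inr, apply_ite (ltBracket (m := m) Cc kInv),
    ite_apply, ltBracket_casimir_X_inr, hQL, ltBracket_zero_left, ite_self, add_zero]

/-- the L-T bracket (semisimple `L`-sector, `[L,T] = 0`, `T`'s
closing on the Casimir) satisfies the Jacobi identity on the generators. -/
theorem lt_bracket_jacobi {n m : ℕ} (Cc : Fin n → Fin n → Fin n → ℂ)
    (hanti : ∀ c a b, Cc c a b = - Cc c b a)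
    (hjac : ∀ a b c e, ∑ d,
      (Cc d a b * Cc e d c + Cc d b c * Cc e d a + Cc d c a * Cc e d b) = 0)
    (kInv : Fin n → Fin n → ℂ)
    (hkInvSym : ∀ a b, kInv a b = kInv b a)
    (hkInv : ∀ a c, ∑ b, killing Cc a b * kInv b c = if a = c then 1 else 0)
    (hinvariant : ∀ a b c, ∑ d,
      (Cc d a b * killing Cc d c + Cc d a c * killing Cc b d) = 0) :
    ∀ i j k : Fin n ⊕ Fin m,
      ltBracket (m := m) Cc kInv (ltBracket Cc kInv (X i) (X j)) (X k)
      + ltBracket (m := m) Cc kInv (ltBracket Cc kInv (X j) (X k)) (X i)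
      + ltBracket (m := m) Cc kInv (ltBracket Cc kInv (X k) (X i)) (X j) = 0 :=
  lt_bracket_jacobi_general Cc hanti hjac kInv hkInv hinvariant
end
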